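/- With L as in the Kalman-filter Cholesky factorization (L_{t',t} = Q_t^{1/2} ℓ_{t',t}, ℓ_{t,t}=1, ℓ_{t',t} = F_{t'}(∏_{l=t+1}^{t'} G_l) K_t for t' > t), the following backward recursion computes u = (Lᵀ)⁻¹ x̃ for any x̃ ∈ ℝᴺ: u_N = Q_N^{−1/2} x̃_N, u_{N−1} = Q_{N−1}^{−1/2} x̃_{N−1} − ℓ_{N,N−1} u_N, and for t = N−2,…,1, u_t = Q_t^{−1/2} x̃_t − ℓ̃_{t+1,t} − ℓ_{t+1,t} u_{t+1}, where g_{N−1} = F_N G_N u_N, g_t = g_{t+1} G_{t+1} + F_{t+1} G_{t+1} u_{t+1}, and ℓ̃_{t+1,t} = g_{t+1} G_{t+1} K_t. -/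
import Mathlib


open Matrix

/-- Product `G_s G_{s-1} ⋯ G_{t+1}` of transition matrices (empty product = 1). -/
noncomputable def transProd {q : ℕ} (G : ℕ → Matrix (Fin q) (Fin q) ℝ) (t s : ℕ) :
    Matrix (Fin q) (Fin q) ℝ :=
  ((List.range (s - t)).map (fun i => G (s - i))).prod

/-- Backward recursion of Lemma 4 (computing `u = (Lᵀ)⁻¹ x̃`), 0-based with last index `T`:
`ikfSolve … j = (u_{T-j}, g_{T-j})`, where `u_T = Q_T^{-1/2} x̃_T` (with `g_T = 0`), and
`u_t = Q_t^{-1/2} x̃_t − ℓ̃_{t+1,t} − ℓ_{t+1,t} u_{t+1}` with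
`ℓ̃_{t+1,t} = g_{t+1} G_{t+1} K_t`, `ℓ_{t+1,t} = F_{t+1} G_{t+1} K_t`, and the row vectors
`g` satisfying `g_{T-1} = F_T G_T u_T`, `g_t = g_{t+1} G_{t+1} + F_{t+1} G_{t+1} u_{t+1}`. -/
noncomputable def ikfSolve {q : ℕ} (F : ℕ → Fin q → ℝ) (G : ℕ → Matrix (Fin q) (Fin q) ℝ)
    (K : ℕ → Fin q → ℝ) (Q xt : ℕ → ℝ) (T : ℕ) : ℕ → ℝ × (Fin q → ℝ)
  | 0 => (xt T / Real.sqrt (Q T), 0)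
  | j + 1 =>
      let p := ikfSolve F G K Q xt T j  -- (u_{t+1}, g_{t+1}) with t = T - (j+1)
      let t := T - (j + 1)
      (xt t / Real.sqrt (Q t) - (Matrix.vecMul p.2 (G (t + 1))) ⬝ᵥ K t -
         (F (t + 1) ⬝ᵥ (G (t + 1) *ᵥ K t)) * p.1,
       Matrix.vecMul p.2 (G (t + 1)) + p.1 • Matrix.vecMul (F (t + 1)) (G (t + 1)))

lemma transProd_self {q : ℕ} (G : ℕ → Matrix (Fin q) (Fin q) ℝ) (t : ℕ) :
    transProd G t t = 1 := by simp [transProd]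

lemma transProd_one {q : ℕ} (G : ℕ → Matrix (Fin q) (Fin q) ℝ) (t : ℕ) :
    transProd G t (t+1) = G (t+1) := by simp [transProd, List.range_succ]

lemma transProd_succ {q : ℕ} (G : ℕ → Matrix (Fin q) (Fin q) ℝ) {t s : ℕ} (h : t < s) :
    transProd G t s = transProd G (t+1) s * G (t+1) := by
  unfold transProd
  have h1 : s - t = (s - (t+1)) + 1 := by omega
  rw [h1, List.range_succ, List.map_append, List.prod_append]
  have h2 : s - (s - (t+1)) = t + 1 := by omega
  simp [h2]


lemma sum_vecMul' {q : ℕ} (s : Finset ℕ) (f : ℕ → Fin q → ℝ) (M : Matrix (Fin q) (Fin q) ℝ) :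
    (∑ i ∈ s, f i) ᵥ* M = ∑ i ∈ s, (f i) ᵥ* M :=
  map_sum M.vecMulLinear f s

lemma sum_dotProduct' {q : ℕ} (s : Finset ℕ) (f : ℕ → Fin q → ℝ) (w : Fin q → ℝ) :
    (∑ i ∈ s, f i) ⬝ᵥ w = ∑ i ∈ s, (f i) ⬝ᵥ w := by
  simp only [dotProduct, Finset.sum_apply, Finset.sum_mul]
  exact Finset.sum_comm

lemma gInv {q : ℕ} (F : ℕ → Fin q → ℝ) (G : ℕ → Matrix (Fin q) (Fin q) ℝ)
    (K : ℕ → Fin q → ℝ) (Q xt : ℕ → ℝ) (T : ℕ) :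
    ∀ j, j ≤ T → (ikfSolve F G K Q xt T j).2 =
      ∑ t' ∈ Finset.Ioc (T - j) T,
        (ikfSolve F G K Q xt T (T - t')).1 • ((F t') ᵥ* (transProd G (T - j) t')) := by
  intro j
  induction j with
  | zero => intro _; simp [ikfSolve]
  | succ j ih =>
    intro h
    have hj : j ≤ T := by omega
    have ht1 : T - j = (T - (j+1)) + 1 := by omega
    set t := T - (j+1) with ht
    have hins : Finset.Ioc t T = insert (t+1) (Finset.Ioc (t+1) T) := by
      ext x; simp; omega
    have hLHS : (ikfSolve F G K Q xt T (j+1)).2 =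
        ((ikfSolve F G K Q xt T j).2) ᵥ* (G (t+1)) +
        (ikfSolve F G K Q xt T j).1 • ((F (t+1)) ᵥ* (G (t+1))) := by
      simp [ikfSolve, ← ht]
    have hTj : T - (t+1) = j := by omega
    rw [hLHS, ih hj, ht1]
    rw [hins, Finset.sum_insert (by simp)]
    rw [sum_vecMul' _ _ _, transProd_one, hTj, add_comm]
    congr 1
    apply Finset.sum_congr rfl
    intro x hx
    simp only [Finset.mem_Ioc] at hx
    rw [Matrix.smul_vecMul, Matrix.vecMul_vecMul, transProd_succ G (Nat.lt_of_succ_lt hx.1)]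

lemma uRec {q : ℕ} (F : ℕ → Fin q → ℝ) (G : ℕ → Matrix (Fin q) (Fin q) ℝ)
    (K : ℕ → Fin q → ℝ) (Q xt : ℕ → ℝ) (T : ℕ) :
    ∀ t ≤ T, (ikfSolve F G K Q xt T (T - t)).1 =
      xt t / Real.sqrt (Q t) -
      ∑ t' ∈ Finset.Ioc t T,
        (ikfSolve F G K Q xt T (T - t')).1 * ((F t') ⬝ᵥ (transProd G t t' *ᵥ K t)) := by
  intro t ht
  rcases eq_or_lt_of_le ht with rfl | hlt
  · simp [ikfSolve]
  · have h1 : T - t = (T - (t+1)) + 1 := by omega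
    have h2 : T - ((T - (t+1)) + 1) = t := by omega
    have hLHS : (ikfSolve F G K Q xt T (T - t)).1 =
        xt t / Real.sqrt (Q t) -
        (((ikfSolve F G K Q xt T (T - (t+1))).2) ᵥ* (G (t+1))) ⬝ᵥ K t -
        (F (t+1) ⬝ᵥ (G (t+1) *ᵥ K t)) * (ikfSolve F G K Q xt T (T - (t+1))).1 := by
      rw [h1]; simp only [ikfSolve, h2]
    have hg := gInv F G K Q xt T (T - (t+1)) (by omega)
    have h3 : T - (T - (t+1)) = t + 1 := by omega
    rw [h3] at hg
    have hins : Finset.Ioc t T = insert (t+1) (Finset.Ioc (t+1) T) := by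
      ext x; simp; omega
    have hterm : ∀ x ∈ Finset.Ioc (t+1) T,
        (((ikfSolve F G K Q xt T (T - x)).1 • (F x) ᵥ* (transProd G (t+1) x)) ᵥ* G (t+1)) ⬝ᵥ K t
          = (ikfSolve F G K Q xt T (T - x)).1 * ((F x) ⬝ᵥ (transProd G t x *ᵥ K t)) := by
      intro x hx
      simp only [Finset.mem_Ioc] at hx
      rw [Matrix.smul_vecMul, smul_dotProduct, Matrix.vecMul_vecMul,
        ← Matrix.dotProduct_mulVec, transProd_succ G (Nat.lt_of_succ_lt hx.1), smul_eq_mul]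
    rw [hLHS, hg, hins, Finset.sum_insert (by simp), sum_vecMul' _ _ _, sum_dotProduct' _ _ _,
      Finset.sum_congr rfl hterm, transProd_one]
    ring

/-- Lemma 4 of the paper: with `L` given entrywise by the Kalman-filter Cholesky formulas
(`L_{t',t} = Q_t^{1/2} ℓ_{t',t}`, `ℓ_{t,t} = 1`, `ℓ_{t',t} = F_{t'}(∏_{l=t+1}^{t'} G_l) K_t`
for `t' > t`), the backward recursion computes `u = (Lᵀ)⁻¹ x̃` for any `x̃`. -/
theorem ikf_transpose_inv_mulVec {N q : ℕ} (hN : 0 < N)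
    (F : ℕ → Fin q → ℝ) (G : ℕ → Matrix (Fin q) (Fin q) ℝ)
    (K : ℕ → Fin q → ℝ) (Q : ℕ → ℝ) (hQ : ∀ t, 0 < Q t)
    (L : Matrix (Fin N) (Fin N) ℝ)
    (hL : ∀ t' t : Fin N, L t' t =
      if (t : ℕ) < (t' : ℕ) then Real.sqrt (Q t) * (F t' ⬝ᵥ (transProd G t t' *ᵥ K t))
      else if (t : ℕ) = (t' : ℕ) then Real.sqrt (Q t) else 0)
    (xt : ℕ → ℝ) :
    ∀ t : Fin N, ((L.transpose)⁻¹ *ᵥ fun i : Fin N => xt i) t =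
      (ikfSolve F G K Q xt (N - 1) (N - 1 - t)).1 := by
  set T := N - 1 with hTdef
  have hNT : N = T + 1 := by omega
  set u : ℕ → ℝ := fun k => (ikfSolve F G K Q xt T (T - k)).1 with hu
  have hsqrt : ∀ k : ℕ, Real.sqrt (Q k) ≠ 0 :=
    fun k => ne_of_gt (Real.sqrt_pos.mpr (hQ k))
  -- key: Lᵀ *ᵥ u = x̃
  have key : L.transpose *ᵥ (fun i : Fin N => u i) = fun i : Fin N => xt i := by
    funext t
    have htT : (t : ℕ) ≤ T := by omega
    simp only [Matrix.mulVec, dotProduct, Matrix.transpose_apply]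
    set f : ℕ → ℝ := fun k => if h : k < N then L ⟨k, h⟩ t * u k else 0 with hf
    have hconv : ∀ t' : Fin N, L t' t * u t' = f t' := by
      intro t'
      simp [hf, t'.isLt]
    rw [Finset.sum_congr rfl (fun t' _ => hconv t'), Fin.sum_univ_eq_sum_range f N]
    have hrange : Finset.range N = Finset.Iic (t : ℕ) ∪ Finset.Ioc (t : ℕ) T := by
      ext x; simp; omega
    have hdisj : Disjoint (Finset.Iic (t : ℕ)) (Finset.Ioc (t : ℕ) T) := by
      simp [Finset.disjoint_left]; omega
    rw [hrange, Finset.sum_union hdisj]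
    have h1 : ∑ k ∈ Finset.Iic (t : ℕ), f k = Real.sqrt (Q t) * u t := by
      rw [Finset.sum_eq_single (t : ℕ)]
      · have htN : (t : ℕ) < N := t.isLt
        simp only [hf, dif_pos htN]
        have : (⟨(t : ℕ), htN⟩ : Fin N) = t := by ext; rfl
        rw [this, hL t t]
        simp
      · intro b hb hbne
        simp only [Finset.mem_Iic] at hb
        have hbN : b < N := by omega
        simp only [hf, dif_pos hbN]
        rw [hL ⟨b, hbN⟩ t]
        rw [if_neg (show ¬((t:ℕ) < b) by omega), if_neg (show ¬((t:ℕ) = b) by omega)]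
        ring
      · intro hmem
        exact absurd (Finset.mem_Iic.mpr le_rfl) hmem
    have h2 : ∑ k ∈ Finset.Ioc (t : ℕ) T, f k =
        Real.sqrt (Q t) * ∑ k ∈ Finset.Ioc (t : ℕ) T,
          u k * (F k ⬝ᵥ (transProd G t k *ᵥ K t)) := by
      rw [Finset.mul_sum]
      apply Finset.sum_congr rfl
      intro k hk
      simp only [Finset.mem_Ioc] at hk
      have hkN : k < N := by omega
      simp only [hf, dif_pos hkN]
      rw [hL ⟨k, hkN⟩ t]
      rw [if_pos (by simpa using hk.1)]
      ring
    rw [h1, h2]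
    have hur := uRec F G K Q xt T t htT
    have : u t = xt t / Real.sqrt (Q t) -
        ∑ k ∈ Finset.Ioc (t : ℕ) T, u k * (F k ⬝ᵥ (transProd G t k *ᵥ K t)) := hur
    rw [this, mul_sub]
    have hx : Real.sqrt (Q (t : ℕ)) * (xt t / Real.sqrt (Q (t : ℕ))) = xt t := by
      rw [mul_div_assoc']
      exact mul_div_cancel_left₀ _ (hsqrt t)
    rw [hx]
    ring
  -- invertibility
  have hbt : L.transpose.BlockTriangular id := by
    intro i j hij
    simp only [Matrix.transpose_apply]
    rw [hL j i]
    simp only [id] at hij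
    rw [if_neg (by omega), if_neg (by omega)]
  have hdet : L.transpose.det ≠ 0 := by
    rw [Matrix.det_of_upperTriangular hbt]
    apply Finset.prod_ne_zero_iff.mpr
    intro i _
    simp only [Matrix.transpose_apply]
    rw [hL i i]
    rw [if_neg (lt_irrefl _), if_pos rfl]
    exact hsqrt i
  have hinv : L.transpose⁻¹ * L.transpose = 1 :=
    Matrix.nonsing_inv_mul _ (isUnit_iff_ne_zero.mpr hdet)
  intro t
  have : ((L.transpose)⁻¹ *ᵥ fun i : Fin N => xt i) = fun i : Fin N => u i := by
    rw [← key, Matrix.mulVec_mulVec, hinv, Matrix.one_mulVec]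
  rw [this]
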